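/- arXiv:1711.03196 — 4 statements merged into one kernel-verified Lean document; each statement's English description precedes it below -/
import Mathlib

section
/- Let A be a Noetherian ring, flat over a complete discrete valuation ring O_K with uniformizer π_K, such that A[1/π_K] is normal and A/π_K A is reduced. Then A is normal (i.e. integrally closed in its total ring of fractions). -/
/-!
Flatness makes `π` a nonzerodivisor of `A`, so the total ring of fractions `K` of `A` is also
that of `A[1/π]`. An element `x ∈ K` integral over `A` is integral over the normal ring
`A[1/π]`, hence `πⁿ x = a` for some `a ∈ A`. If `n > 0`, then `a` is a root of the rescaled
monic polynomial of `x`, whose lower coefficients are divisible by `π`; so `a` is nilpotent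
modulo `π`, and since `A/πA` is reduced, `a = π b` with `πⁿ⁻¹ x = b`. Descending on `n`
gives `x ∈ A`.
-/

open Polynomial
open scoped nonZeroDivisors

theorem algebraMap_mem_nonZeroDivisors_of_flat {R S : Type*} [CommRing R] [CommRing S]
    [Algebra R S] [Module.Flat R S] {r : R} (hr : r ∈ R⁰) : algebraMap R S r ∈ S⁰ := by
  have hreg : IsSMulRegular R r := (isRegular_iff_mem_nonZeroDivisors.mpr hr).left
  exact isRegular_iff_mem_nonZeroDivisors.mp
    ((Commute.isRegular_iff (Commute.all _)).mpr hreg.of_flat.isLeftRegular)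

theorem Polynomial.Monic.map_scaleRoots_quotient_of_mem {R : Type*} [CommRing R] {q : R[X]}
    (hq : q.Monic) {I : Ideal R} {s : R} (hs : s ∈ I) :
    (q.scaleRoots s).map (Ideal.Quotient.mk I) = X ^ q.natDegree := by
  ext i
  obtain hi | rfl | hi := lt_trichotomy i q.natDegree
  · simp [coeff_scaleRoots, hi.ne, Ideal.Quotient.eq_zero_iff_mem.mpr hs,
      Nat.sub_ne_zero_of_lt hi]
  · simp [hq]
  · simp [coeff_eq_zero_of_natDegree_lt hi, hi.ne']

theorem mem_radical_of_algebraMap_eq_mul_of_isIntegral {A B : Type*} [CommRing A] [CommRing B]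
    [Algebra A B] (hinj : Function.Injective (algebraMap A B)) {I : Ideal A} {s a : A}
    (hs : s ∈ I) {x : B} (hx : IsIntegral A x) (ha : algebraMap A B a = algebraMap A B s * x) :
    a ∈ I.radical := by
  obtain ⟨q, hq, hqx⟩ := hx
  have hroot : (q.scaleRoots s).eval a = 0 := by
    apply hinj
    rw [map_zero, ← eval₂_at_apply, ha]
    exact scaleRoots_eval₂_eq_zero _ hqx
  refine ⟨q.natDegree, Ideal.Quotient.eq_zero_iff_mem.mp ?_⟩
  simpa [← eval₂_at_apply, eval₂_eq_eval_map, hq.map_scaleRoots_quotient_of_mem hs] using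
    congrArg (Ideal.Quotient.mk I) hroot

theorem exists_algebraMap_eq_of_algebraMap_eq_pow_mul {A B : Type*} [CommRing A] [CommRing B]
    [Algebra A B] (hinj : Function.Injective (algebraMap A B)) {p : A}
    (hp : IsLeftRegular (algebraMap A B p)) (hrad : (Ideal.span {p}).IsRadical) {x : B}
    (hx : IsIntegral A x) :
    ∀ (n : ℕ) (a : A), algebraMap A B a = algebraMap A B p ^ n * x → ∃ y, algebraMap A B y = x
  | 0, a, ha => ⟨a, by simpa using ha⟩
  | n + 1, a, ha => by
    have hpow : p ^ (n + 1) ∈ Ideal.span {p} :=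
      Ideal.pow_mem_of_mem _ (Ideal.mem_span_singleton_self p) _ n.succ_pos
    obtain ⟨b, rfl⟩ : p ∣ a := Ideal.mem_span_singleton.mp <| hrad <|
      mem_radical_of_algebraMap_eq_mul_of_isIntegral hinj hpow hx (by rw [ha, map_pow])
    refine exists_algebraMap_eq_of_algebraMap_eq_pow_mul hinj hp hrad hx n b (hp ?_)
    simp only [← map_mul, ha, pow_succ']
    ring

theorem exists_algebraMap_eq_pow_mul_of_isIntegrallyClosed_away {A K : Type*} [CommRing A]
    [CommRing K] [Algebra A K] [IsFractionRing A K] {p : A} (hp : p ∈ A⁰)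
    (hA : IsIntegrallyClosed (Localization.Away p)) {x : K} (hx : IsIntegral A x) :
    ∃ (n : ℕ) (a : A), algebraMap A K a = algebraMap A K p ^ n * x := by
  have hle : Submonoid.powers p ≤ A⁰ := Submonoid.powers_le.mpr hp
  let : Algebra (Localization.Away p) K :=
    IsLocalization.localizationAlgebraOfSubmonoidLe _ K _ _ hle
  have : IsScalarTower A (Localization.Away p) K :=
    IsLocalization.localization_isScalarTower_of_submonoid_le _ K _ _ hle
  have : IsFractionRing (Localization.Away p) K :=
    IsFractionRing.isFractionRing_of_isLocalization (Submonoid.powers p) _ K hle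
  obtain ⟨y, rfl⟩ := (isIntegrallyClosed_iff K).mp hA hx.tower_top
  obtain ⟨n, a, hya⟩ := IsLocalization.Away.surj p y
  refine ⟨n, a, ?_⟩
  rw [IsScalarTower.algebraMap_apply A (Localization.Away p) K, ← hya]
  simp [← IsScalarTower.algebraMap_apply, mul_comm]

theorem stmt_0_general
    {O : Type*} [CommRing O] [IsDomain O]
    (π : O) (hπ : Irreducible π)
    {A : Type*} [CommRing A] [Algebra O A]
    [Module.Flat O A]
    (hnormal : IsIntegrallyClosed (Localization.Away (algebraMap O A π)))
    (hreduced : IsReduced (A ⧸ Ideal.span {algebraMap O A π})) :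
    IsIntegrallyClosed A := by
  have hπA : algebraMap O A π ∈ A⁰ :=
    algebraMap_mem_nonZeroDivisors_of_flat (mem_nonZeroDivisors_of_ne_zero hπ.ne_zero)
  rw [isIntegrallyClosed_iff (FractionRing A)]
  intro x hx
  obtain ⟨n, a, ha⟩ := exists_algebraMap_eq_pow_mul_of_isIntegrallyClosed_away hπA hnormal hx
  exact exists_algebraMap_eq_of_algebraMap_eq_pow_mul (IsFractionRing.injective A _)
    (IsLocalization.map_units (FractionRing A) ⟨_, hπA⟩).isRegular.left
    ((Ideal.isRadical_iff_quotient_reduced _).mpr hreduced) hx n a ha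

/-- Let `A` be a Noetherian ring, flat over a complete discrete
valuation ring `O_K` with uniformizer `π`, such that `A[1/π]` is normal and
`A/πA` is reduced.  Then `A` is normal (integrally closed in its total ring of
fractions). -/
theorem stmt_0
    {O : Type*} [CommRing O] [IsDomain O] [IsDiscreteValuationRing O]
    [IsAdicComplete (IsLocalRing.maximalIdeal O) O]
    (π : O) (hπ : Irreducible π)
    {A : Type*} [CommRing A] [IsNoetherianRing A] [Algebra O A]
    [Module.Flat O A]
    (hnormal : IsIntegrallyClosed (Localization.Away (algebraMap O A π)))
    (hreduced : IsReduced (A ⧸ Ideal.span {algebraMap O A π})) :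
    IsIntegrallyClosed A :=
  stmt_0_general π hπ hnormal hreduced
end

section
/- Let A be a π-torsion-free ring over a DVR with uniformizer π such that A/πA is reduced. Define for x in A[1/π] the valuation v_A(x) = sup{n ∈ ℤ : π^{-n}x ∈ A} and norm |x|_A = |π|^{v_A(x)} (for a fixed 0 < |π| < 1). Then |f+g|_A ≤ max(|f|_A, |g|_A) and |f^n|_A = |f|_A^n for all f, g in A[1/π] and n ≥ 1. -/
/-!
Write `f = π^{v f} a` with `a ∈ A`. Maximality of `v f` says `π ∤ a`, and since `A/πA` is reduced
`π` is radical, so `π ∤ aⁿ`. As `π` is a non-zero-divisor, `A` embeds in `A[1/π]`, so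
`fⁿ = π^{n v f} aⁿ` is nonzero and cannot be divisible by `π^{n v f + 1}`; hence `v (fⁿ) = n v f`.
The ultrametric inequality only uses that both `f` and `g` are divisible by `π^{min (v f) (v g)}`.
-/

section

variable {A L : Type*} [CommRing A] [CommRing L] [Algebra A L] {u : Lˣ}

theorem dvd_of_zpow_mul_eq_zpow_add_one_mul {p : A} (hu : (u : L) = algebraMap A L p)
    (hinj : Function.Injective (algebraMap A L)) {k : ℤ} {a b : A}
    (h : ((u ^ k : Lˣ) : L) * algebraMap A L a = ((u ^ (k + 1) : Lˣ) : L) * algebraMap A L b) :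
    p ∣ a := by
  rw [zpow_add_one, Units.val_mul, mul_assoc, Units.mul_right_inj, hu, ← map_mul] at h
  exact ⟨b, hinj h⟩

end

/-- `v x` is the largest `n` with `u⁻ⁿ x ∈ A`; nothing is required of `v 0`. -/
def IsDivisibilityValuation (A : Type*) {L : Type*} [CommRing A] [CommRing L] [Algebra A L]
    (u : Lˣ) (v : L → ℤ) : Prop :=
  ∀ x : L, x ≠ 0 → ∀ n : ℤ, (∃ a : A, x = ((u ^ n : Lˣ) : L) * algebraMap A L a) ↔ n ≤ v x

namespace IsDivisibilityValuation

variable {A L : Type*} [CommRing A] [CommRing L] [Algebra A L] {u : Lˣ} {v : L → ℤ}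

theorem min_le_apply_add (hv : IsDivisibilityValuation A u v) {f g : L} (hf : f ≠ 0) (hg : g ≠ 0)
    (hfg : f + g ≠ 0) : min (v f) (v g) ≤ v (f + g) := by
  obtain ⟨a, ha⟩ := (hv f hf _).mpr (min_le_left (v f) (v g))
  obtain ⟨b, hb⟩ := (hv g hg _).mpr (min_le_right (v f) (v g))
  exact (hv (f + g) hfg _).mp ⟨a + b, by rw [map_add, mul_add, ← ha, ← hb]⟩

theorem not_dvd_of_eq_zpow_mul (hv : IsDivisibilityValuation A u v) {p : A}
    (hu : (u : L) = algebraMap A L p) {f : L} (hf : f ≠ 0) {a : A}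
    (ha : f = ((u ^ v f : Lˣ) : L) * algebraMap A L a) : ¬ p ∣ a := by
  rintro ⟨b, rfl⟩
  have : v f + 1 ≤ v f := (hv f hf _).mp
    ⟨b, ha.trans (by rw [map_mul, ← hu, zpow_add_one, Units.val_mul, mul_assoc])⟩
  omega

theorem apply_pow (hv : IsDivisibilityValuation A u v) {p : A}
    (hu : (u : L) = algebraMap A L p) (hinj : Function.Injective (algebraMap A L))
    (hp : IsRadical p) {f : L} (hf : f ≠ 0) (n : ℕ) :
    v (f ^ n) = n * v f := by
  obtain ⟨a, ha⟩ := (hv f hf (v f)).mpr le_rfl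
  have hpa : ¬ p ∣ a ^ n := fun h ↦ hv.not_dvd_of_eq_zpow_mul hu hf ha (hp n a h)
  have hfn : f ^ n = ((u ^ (n * v f) : Lˣ) : L) * algebraMap A L (a ^ n) := by
    conv_lhs => rw [ha]
    rw [mul_pow, map_pow, ← Units.val_pow_eq_pow_val, ← zpow_natCast, ← zpow_mul,
      mul_comm (v f)]
  have hfn0 : f ^ n ≠ 0 := fun h ↦ hpa <|
    dvd_of_zpow_mul_eq_zpow_add_one_mul hu hinj (b := 0) (by rw [← hfn, h, map_zero, mul_zero])
  have hle : n * v f ≤ v (f ^ n) := (hv _ hfn0 _).mp ⟨a ^ n, hfn⟩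
  have hlt : ¬ n * v f + 1 ≤ v (f ^ n) := fun h ↦ by
    obtain ⟨b, hb⟩ := (hv _ hfn0 _).mpr h
    exact hpa (dvd_of_zpow_mul_eq_zpow_add_one_mul hu hinj (hfn.symm.trans hb))
  omega

end IsDivisibilityValuation

theorem stmt_1_general
    {O : Type*} [CommRing O]
    {A : Type*} [CommRing A] [Algebra O A]
    (π : O)
    (htorsionfree : ∀ a : A, algebraMap O A π * a = 0 → a = 0)
    (hreduced : IsReduced (A ⧸ Ideal.span {algebraMap O A π}))
    (L : Type*) [CommRing L] [Algebra A L]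
    [IsLocalization.Away (algebraMap O A π) L]
    (u : Lˣ) (hu : (u : L) = algebraMap A L (algebraMap O A π))
    (v : L → ℤ)
    (hv : ∀ x : L, x ≠ 0 →
      ∀ n : ℤ, (∃ a : A, x = ((u ^ n : Lˣ) : L) * algebraMap A L a) ↔ n ≤ v x) :
    (∀ f g : L, f ≠ 0 → g ≠ 0 → f + g ≠ 0 → min (v f) (v g) ≤ v (f + g)) ∧
    (∀ f : L, f ≠ 0 → ∀ n : ℕ, 0 < n → v (f ^ n) = n * v f) := by
  have hinj : Function.Injective (algebraMap A L) := by
    refine IsLocalization.injective L (M := .powers (algebraMap O A π))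
      (Submonoid.powers_le.mpr ?_)
    exact mem_nonZeroDivisors_iff_right.mpr fun a ha ↦ htorsionfree a (by rwa [mul_comm])
  have hrad : IsRadical (algebraMap O A π) :=
    isRadical_iff_span_singleton.mpr ((Ideal.isRadical_iff_quotient_reduced _).mpr hreduced)
  have hv : IsDivisibilityValuation A u v := hv
  exact ⟨fun f g ↦ hv.min_le_apply_add, fun f hf n _ ↦ hv.apply_pow hu hinj hrad hf n⟩

/-- Let `A` be a `π`-torsion-free ring over a DVR with uniformizer `π`
such that `A/πA` is reduced.  For `x ∈ A[1/π]` let `v_A x = sup{n : π^{-n} x ∈ A}`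
(encoded below by: for every `n : ℤ`, `π^{-n}x ∈ A ↔ n ≤ v x`) and
`|x|_A = |π|^{v_A x}` for a fixed `0 < |π| < 1`.  Then `|f+g|_A ≤ max (|f|_A) (|g|_A)`
(i.e. `min (v f) (v g) ≤ v (f+g)`) and `|f^n|_A = |f|_A^n` (i.e. `v (f^n) = n * v f`)
for all `f, g` in `A[1/π]` and `n ≥ 1`. -/
theorem stmt_1
    {O : Type*} [CommRing O] [IsDomain O] [IsDiscreteValuationRing O]
    {A : Type*} [CommRing A] [Algebra O A]
    (π : O) (hπ : Irreducible π)
    (htorsionfree : ∀ a : A, algebraMap O A π * a = 0 → a = 0)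
    (hreduced : IsReduced (A ⧸ Ideal.span {algebraMap O A π}))
    (L : Type*) [CommRing L] [Algebra A L]
    [IsLocalization.Away (algebraMap O A π) L]
    (u : Lˣ) (hu : (u : L) = algebraMap A L (algebraMap O A π))
    (v : L → ℤ)
    (hv : ∀ x : L, x ≠ 0 →
      ∀ n : ℤ, (∃ a : A, x = ((u ^ n : Lˣ) : L) * algebraMap A L a) ↔ n ≤ v x) :
    (∀ f g : L, f ≠ 0 → g ≠ 0 → f + g ≠ 0 → min (v f) (v g) ≤ v (f + g)) ∧
    (∀ f : L, f ≠ 0 → ∀ n : ℕ, 0 < n → v (f ^ n) = n * v f) :=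
  stmt_1_general π htorsionfree hreduced L u hu v hv
end

section
/- Let A be a π-torsion-free Noetherian O_K-algebra with A/πA reduced such that A[1/π] is normal. Then A = {x ∈ A[1/π] : |x|_A ≤ 1}, where |·|_A is the π-adic gauge norm; in particular every element of A[1/π] integral over A lies in A. -/
/-!
Write a nonzero `x ∈ A[1/π]` as `x = π^{v(x)} a` with `a ∈ A`, `π ∤ a`. Since `A/πA` is
reduced, `π ∤ aⁿ` as well, so `v(xⁿ) = n v(x)`. If `x` is integral of degree `n` over `A` and
`v(x) < 0`, the equation `xⁿ = -∑_{i<n} cᵢ xⁱ` puts `xⁿ` in `π^{(n-1)v(x)} A`, whence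
`(n-1) v(x) ≤ v(xⁿ) = n v(x)`, contradicting `v(x) < 0`.
-/

open Submodule

section

variable {A L : Type*} [CommRing A] [CommRing L] [Algebra A L] {ϖ : A} {u : Lˣ} {v : L → ℤ}

variable (A) in
/-- `span A {u ^ n}` is the lattice `π^n A` of the paper, so `v x = max {n | π^{-n} x ∈ A}`. -/
def IsGaugeValuation (u : Lˣ) (v : L → ℤ) : Prop :=
  ∀ x : L, x ≠ 0 → ∀ n : ℤ, x ∈ span A {((u ^ n : Lˣ) : L)} ↔ n ≤ v x

theorem mem_span_zpow_iff_exists {n : ℤ} {x : L} :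
    x ∈ span A {((u ^ n : Lˣ) : L)} ↔
      ∃ a : A, x = ((u ^ n : Lˣ) : L) * algebraMap A L a := by
  simp only [mem_span_singleton, Algebra.smul_def, eq_comm (a := x), mul_comm]

theorem pow_mem_span_zpow {m : ℤ} {x : L} (hx : x ∈ span A {((u ^ m : Lˣ) : L)})
    (k : ℕ) : x ^ k ∈ span A {((u ^ ((k : ℤ) * m) : Lˣ) : L)} := by
  obtain ⟨c, rfl⟩ := mem_span_singleton.mp hx
  rw [smul_pow, mul_comm, zpow_mul, zpow_natCast, Units.val_pow_eq_pow_val]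
  exact Submodule.smul_mem _ _ (mem_span_singleton_self _)

theorem span_zpow_le (hu : (u : L) = algebraMap A L ϖ) {m n : ℤ} (hmn : m ≤ n) :
    span A {((u ^ n : Lˣ) : L)} ≤ span A {((u ^ m : Lˣ) : L)} := by
  obtain ⟨k, rfl⟩ := Int.exists_add_of_le hmn
  rw [span_singleton_le_iff_mem, mem_span_zpow_iff_exists]
  exact ⟨ϖ ^ k, by rw [zpow_add, Units.val_mul, zpow_natCast, Units.val_pow_eq_pow_val, hu,
    map_pow]⟩

theorem ne_zero_of_eq_zpow_mul (hinj : Function.Injective (algebraMap A L)) {x : L} {n : ℤ}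
    {a : A} (hxa : x = ((u ^ n : Lˣ) : L) * algebraMap A L a) (ha : ¬ϖ ∣ a) : x ≠ 0 := by
  rintro rfl
  have : algebraMap A L a = 0 := by simpa using hxa.symm
  exact ha (by simp [(map_eq_zero_iff _ hinj).mp this])

namespace IsGaugeValuation

theorem exists_eq_zpow_mul_not_dvd (hv : IsGaugeValuation A u v)
    (hu : (u : L) = algebraMap A L ϖ) {x : L} (hx : x ≠ 0) :
    ∃ a : A, x = ((u ^ v x : Lˣ) : L) * algebraMap A L a ∧ ¬ϖ ∣ a := by
  obtain ⟨a, ha⟩ := mem_span_zpow_iff_exists.mp ((hv x hx (v x)).mpr le_rfl)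
  refine ⟨a, ha, ?_⟩
  rintro ⟨b, rfl⟩
  have : x ∈ span A {((u ^ (v x + 1) : Lˣ) : L)} := mem_span_zpow_iff_exists.mpr
    ⟨b, by nth_rewrite 1 [ha]; rw [zpow_add_one, Units.val_mul, map_mul, hu]; ring⟩
  exact absurd ((hv x hx _).mp this) (by omega)

theorem val_eq_of_eq_zpow_mul (hv : IsGaugeValuation A u v) (hu : (u : L) = algebraMap A L ϖ)
    (hinj : Function.Injective (algebraMap A L)) {x : L} {n : ℤ} {a : A}
    (hxa : x = ((u ^ n : Lˣ) : L) * algebraMap A L a) (ha : ¬ϖ ∣ a) : v x = n := by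
  have hx := ne_zero_of_eq_zpow_mul hinj hxa ha
  refine le_antisymm ?_ ((hv x hx n).mp (mem_span_zpow_iff_exists.mpr ⟨a, hxa⟩))
  by_contra! hlt
  obtain ⟨b, hb⟩ := mem_span_zpow_iff_exists.mp ((hv x hx (n + 1)).mpr hlt)
  rw [hxa, zpow_add_one, Units.val_mul, mul_assoc] at hb
  have hab := (u ^ n).isUnit.mul_left_cancel hb
  rw [hu, ← map_mul] at hab
  exact ha ⟨b, hinj hab⟩

theorem exists_pow_eq_zpow_mul_not_dvd (hv : IsGaugeValuation A u v)
    (hu : (u : L) = algebraMap A L ϖ) (hϖ : IsRadical ϖ) {x : L} (hx : x ≠ 0) (k : ℕ) :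
    ∃ a : A, x ^ k = ((u ^ ((k : ℤ) * v x) : Lˣ) : L) * algebraMap A L a ∧ ¬ϖ ∣ a := by
  obtain ⟨a, ha, hna⟩ := hv.exists_eq_zpow_mul_not_dvd hu hx
  refine ⟨a ^ k, ?_, fun h => hna (hϖ k a h)⟩
  nth_rewrite 1 [ha]
  rw [mul_pow, mul_comm (k : ℤ), zpow_mul, zpow_natCast, Units.val_pow_eq_pow_val, map_pow]

theorem pow_ne_zero (hv : IsGaugeValuation A u v) (hu : (u : L) = algebraMap A L ϖ)
    (hinj : Function.Injective (algebraMap A L)) (hϖ : IsRadical ϖ) {x : L} (hx : x ≠ 0)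
    (k : ℕ) : x ^ k ≠ 0 :=
  let ⟨_, hxa, ha⟩ := hv.exists_pow_eq_zpow_mul_not_dvd hu hϖ hx k
  ne_zero_of_eq_zpow_mul hinj hxa ha

theorem val_pow (hv : IsGaugeValuation A u v) (hu : (u : L) = algebraMap A L ϖ)
    (hinj : Function.Injective (algebraMap A L)) (hϖ : IsRadical ϖ) {x : L} (hx : x ≠ 0)
    (k : ℕ) : v (x ^ k) = k * v x :=
  let ⟨_, hxa, ha⟩ := hv.exists_pow_eq_zpow_mul_not_dvd hu hϖ hx k
  hv.val_eq_of_eq_zpow_mul hu hinj hxa ha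

theorem nonneg_of_isIntegral (hv : IsGaugeValuation A u v) (hu : (u : L) = algebraMap A L ϖ)
    (hinj : Function.Injective (algebraMap A L)) (hϖ : IsRadical ϖ) {x : L} (hx : x ≠ 0)
    (hint : IsIntegral A x) : 0 ≤ v x := by
  have : Nontrivial L := ⟨⟨x, 0, hx⟩⟩
  set p := minpoly A x
  set n := p.natDegree
  have hn : 0 < n := minpoly.natDegree_pos hint
  by_contra! hneg
  have hxn : x ^ n = -∑ i ∈ Finset.range n, p.coeff i • x ^ i := by
    have h := minpoly.aeval A x
    rw [Polynomial.aeval_eq_sum_range, Finset.sum_range_succ,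
      (minpoly.monic hint).coeff_natDegree, one_smul] at h
    linear_combination h
  have hmem : x ^ n ∈ span A {((u ^ (((n : ℤ) - 1) * v x) : Lˣ) : L)} := by
    rw [hxn]
    refine neg_mem (sum_mem fun i hi => Submodule.smul_mem _ _ (span_zpow_le hu ?_
      (pow_mem_span_zpow ((hv x hx _).mpr le_rfl) i)))
    have : (i : ℤ) ≤ n - 1 := by have := Finset.mem_range.mp hi; omega
    nlinarith
  have hle := (hv _ (hv.pow_ne_zero hu hinj hϖ hx n) _).mp hmem
  rw [hv.val_pow hu hinj hϖ hx] at hle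
  linarith

end IsGaugeValuation

end

theorem stmt_2_general
    {O : Type*} [CommRing O]
    {A : Type*} [CommRing A] [Algebra O A]
    (π : O)
    (htorsionfree : ∀ a : A, algebraMap O A π * a = 0 → a = 0)
    (hreduced : IsReduced (A ⧸ Ideal.span {algebraMap O A π}))
    (L : Type*) [CommRing L] [Algebra A L]
    [IsLocalization.Away (algebraMap O A π) L]
    (u : Lˣ) (hu : (u : L) = algebraMap A L (algebraMap O A π))
    (v : L → ℤ)
    (hv : ∀ x : L, x ≠ 0 →
      ∀ n : ℤ, (∃ a : A, x = ((u ^ n : Lˣ) : L) * algebraMap A L a) ↔ n ≤ v x) :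
    (∀ x : L, x ≠ 0 → ((0 ≤ v x) ↔ ∃ a : A, x = algebraMap A L a)) ∧
    (∀ x : L, IsIntegral A x → ∃ a : A, x = algebraMap A L a) := by
  have hgauge : IsGaugeValuation A u v := fun x hx n => by
    rw [mem_span_zpow_iff_exists]
    exact hv x hx n
  have hinj : Function.Injective (algebraMap A L) := IsLocalization.injective L <|
    Submonoid.powers_le.mpr (mem_nonZeroDivisors_iff_left.mpr htorsionfree)
  have hrad : IsRadical (algebraMap O A π) := isRadical_iff_span_singleton.mpr <|
    (Ideal.isRadical_iff_quotient_reduced _).mpr hreduced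
  have hA (x : L) (hx : x ≠ 0) : 0 ≤ v x ↔ ∃ a : A, x = algebraMap A L a := by
    simpa using (hv x hx 0).symm
  refine ⟨hA, fun x hint => ?_⟩
  rcases eq_or_ne x 0 with rfl | hx
  · exact ⟨0, (map_zero _).symm⟩
  · exact (hA x hx).mp (hgauge.nonneg_of_isIntegral hu hinj hrad hx hint)

/-- Let `A` be a `π`-torsion-free Noetherian `O_K`-algebra with `A/πA`
reduced such that `A[1/π]` is normal.  Then `A = {x ∈ A[1/π] : |x|_A ≤ 1}` (here
`|x|_A ≤ 1` means `0 ≤ v_A x`, with `v_A` the `π`-adic gauge valuation, encoded by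
`(∃ a, x = π^n a) ↔ n ≤ v x`); in particular every element of `A[1/π]` integral over
`A` lies in `A`. -/
theorem stmt_2
    {O : Type*} [CommRing O] [IsDomain O] [IsDiscreteValuationRing O]
    {A : Type*} [CommRing A] [IsNoetherianRing A] [Algebra O A]
    (π : O) (hπ : Irreducible π)
    (htorsionfree : ∀ a : A, algebraMap O A π * a = 0 → a = 0)
    (hreduced : IsReduced (A ⧸ Ideal.span {algebraMap O A π}))
    (L : Type*) [CommRing L] [Algebra A L]
    [IsLocalization.Away (algebraMap O A π) L]
    (hnormal : IsIntegrallyClosed L)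
    (u : Lˣ) (hu : (u : L) = algebraMap A L (algebraMap O A π))
    (v : L → ℤ)
    (hv : ∀ x : L, x ≠ 0 →
      ∀ n : ℤ, (∃ a : A, x = ((u ^ n : Lˣ) : L) * algebraMap A L a) ↔ n ≤ v x) :
    (∀ x : L, x ≠ 0 → ((0 ≤ v x) ↔ ∃ a : A, x = algebraMap A L a)) ∧
    (∀ x : L, IsIntegral A x → ∃ a : A, x = algebraMap A L a) :=
  stmt_2_general π htorsionfree hreduced L u hu v hv
end

section
/- Let U be a compact operator with operator norm strictly less than 1 on a p-adic Banach space, and suppose d is a linear map between Banach spaces satisfying U∘d = p^{-m}·d∘U for some positive integer m. If f is a generalized eigenvector of U with eigenvalue λ of p-adic valuation v(λ) < m, then d(f) = 0. -/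
/-- If `(T - μ)^N v = 0` and `‖T‖ < ‖μ‖`, then `v = 0`. -/
lemma stmt_9_aux {L E : Type*} [NontriviallyNormedField L] [NormedAddCommGroup E]
    [NormedSpace L E] (T : E →L[L] E) (μ : L) (h : ‖T‖ < ‖μ‖) :
    ∀ N (v : E), ((T - μ • ContinuousLinearMap.id L E) ^ N) v = 0 → v = 0 := by
  intro N
  induction N with
  | zero => intro v hv; simpa using hv
  | succ n ih =>
    intro v hv
    rw [pow_succ, ContinuousLinearMap.mul_apply] at hv
    have h1 : (T - μ • ContinuousLinearMap.id L E) v = 0 := ih _ hv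
    have h2 : T v = μ • v := by
      have := sub_eq_zero.mp (by simpa [ContinuousLinearMap.sub_apply] using h1)
      simpa using this
    by_contra hv0
    have hvpos : 0 < ‖v‖ := norm_pos_iff.mpr hv0
    have hle : ‖μ‖ * ‖v‖ ≤ ‖T‖ * ‖v‖ := by
      calc ‖μ‖ * ‖v‖ = ‖μ • v‖ := (norm_smul μ v).symm
        _ = ‖T v‖ := by rw [h2]
        _ ≤ ‖T‖ * ‖v‖ := T.le_opNorm v
    nlinarith

/-- Let `U` be a compact operator with operator norm strictly less
than `1` on a `p`-adic Banach space, and suppose `d` is a linear map between Banach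
spaces satisfying `U ∘ d = p^{-m} · d ∘ U` for some positive integer `m` (with `U`
acting compatibly on source and target).  If `f` is a generalized eigenvector of `U`
with eigenvalue `λ` of `p`-adic valuation `v(λ) < m` (i.e. `‖p‖^m < ‖λ‖`), then
`d f = 0`. -/
theorem stmt_9 {L E F : Type*} [NontriviallyNormedField L]
    [NormedAddCommGroup E] [NormedSpace L E] [CompleteSpace E]
    [NormedAddCommGroup F] [NormedSpace L F] [CompleteSpace F]
    (U_E : E →L[L] E) (U_F : F →L[L] F) (d : E →L[L] F)
    (hUEcompact : IsCompactOperator U_E) (hUFcompact : IsCompactOperator U_F)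
    (hUE : ‖U_E‖ < 1) (hUF : ‖U_F‖ < 1)
    (p c lam : L) (hp0 : p ≠ 0) (hp1 : ‖p‖ < 1)
    (m : ℕ) (hm : 0 < m) (hc : c * p ^ m = 1)
    (hcomm : U_F.comp d = c • d.comp U_E)
    (hlam : ‖p‖ ^ m < ‖lam‖)
    (f : E) (N : ℕ)
    (hf : ((U_E - lam • ContinuousLinearMap.id L E) ^ N) f = 0) :
    d f = 0 := by
  have hcomm' : ∀ x : E, U_F (d x) = c • d (U_E x) := by
    intro x
    have := ContinuousLinearMap.ext_iff.mp hcomm x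
    simpa using this
  -- intertwining for the shifted operators, iterated
  have key : ∀ (n : ℕ) (x : E),
      ((U_F - (c * lam) • ContinuousLinearMap.id L F) ^ n) (d x)
        = c ^ n • d (((U_E - lam • ContinuousLinearMap.id L E) ^ n) x) := by
    intro n
    induction n with
    | zero => intro x; simp
    | succ k ih =>
      intro x
      have step : (U_F - (c * lam) • ContinuousLinearMap.id L F) (d x)
          = c • d ((U_E - lam • ContinuousLinearMap.id L E) x) := by
        calc (U_F - (c * lam) • ContinuousLinearMap.id L F) (d x)
            = U_F (d x) - (c * lam) • d x := by simp
          _ = c • d (U_E x) - c • (lam • d x) := by rw [hcomm' x, mul_smul]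
          _ = c • (d (U_E x) - lam • d x) := (smul_sub c _ _).symm
          _ = c • d (U_E x - lam • x) := by rw [map_sub, map_smul]
          _ = c • d ((U_E - lam • ContinuousLinearMap.id L E) x) := by simp
      rw [pow_succ, ContinuousLinearMap.mul_apply, step, map_smul, ih]
      rw [smul_smul, mul_comm]
      congr 1
      rw [pow_succ]
  have hzero : ((U_F - (c * lam) • ContinuousLinearMap.id L F) ^ N) (d f) = 0 := by
    rw [key N f, hf, map_zero, smul_zero]
  -- norm estimate: ‖U_F‖ < ‖c * lam‖
  have hpm : (0:ℝ) < ‖p‖ ^ m := pow_pos (norm_pos_iff.mpr hp0) m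
  have hcnorm : ‖c‖ * ‖p‖ ^ m = 1 := by
    have := congrArg norm hc
    simpa [norm_mul, norm_pow] using this
  have hnorm : 1 < ‖c * lam‖ := by
    rw [norm_mul]
    have hcval : ‖c‖ = (‖p‖ ^ m)⁻¹ := by
      field_simp at hcnorm ⊢; linarith [hcnorm]
    rw [hcval, ← div_eq_inv_mul]
    exact (one_lt_div hpm).mpr hlam
  exact stmt_9_aux U_F (c * lam) (lt_trans hUF hnorm) N (d f) hzero
end
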